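/- arXiv:1804.07108 — 2 statements merged into one kernel-verified Lean document; each statement's English description precedes it below -/
import Mathlib

section
/- For every integer k ≥ 1, define centres c_i = 2i/(k+1) − 1 for 1 ≤ i ≤ k (except when k is odd, where c_{(k+1)/2} = 1/(k+1)) and intervals [α_i, β_i] = [c_i − 1/(8(k+1)²), c_i + 1/(8(k+1)²)]. Then for all a_i ∈ [α_i, β_i]: (1) |a_i| ≤ 1; (2) |Σ_{j=1}^k a_j| ≤ 1; (3) β_i − α_i ≥ 1/(4(k+1)²); (4) |a_i − a_j| ≥ 1/(4(k+1)²) for i ≠ j; (5) |a_i + Σ_{j=1}^k a_j| ≥ 1/(4(k+1)²); (6) the number of indices j with a_j ≥ 1/4 is at least (k+1)/5. -/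
/-!
With `u = 1/(k+1)` every centre is `c_i = N_i u` for an integer `N_i`: the `N_i` are distinct,
`|N_i| ≤ k`, `∑ N_i = s ∈ {0, 1}` (the odd case moves the middle numerator from `0` to `1`), and a
parity argument shows `N_i + s ≠ 0`. Each `a_i` lies within `u²/8` of `N_i u`, so `a_i - a_j` and
`a_i + ∑ a_j` lie within `(k+1)u²/8 = u/8` of a nonzero integer multiple of `u`, which keeps them
away from `0`. For the count, every index `i ≥ 5(k+1)/8` has `c_i ≥ 1/4 + u/4`.
-/

open Finset

-- The numerator of `c_i` over `k + 1`, with `i` counted from `0`.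
def centreIndex (k i : ℕ) : ℤ :=
  if Odd k ∧ i + 1 = (k + 1) / 2 then 1 else 2 * (i + 1) - (k + 1)

section centreIndex

variable {k i : ℕ}

lemma abs_centreIndex_le (hi : i < k) : |centreIndex k i| ≤ k := by
  unfold centreIndex
  split_ifs <;> rw [abs_le] <;> omega

lemma centreIndex_injective (k : ℕ) : Function.Injective (centreIndex k) := by
  intro i j h
  simp only [centreIndex, Nat.odd_iff] at h
  split_ifs at h <;> omega

lemma centreIndex_add_ne_zero (k i : ℕ) :
    centreIndex k i + (if Odd k then 1 else 0) ≠ 0 := by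
  simp only [centreIndex, Nat.odd_iff]
  split_ifs <;> omega

lemma add_two_le_four_mul_centreIndex (hm : min (5 * (k + 1) / 8) (k - 1) ≤ i) (hi : i < k) :
    (k : ℤ) + 2 ≤ 4 * centreIndex k i := by
  simp only [centreIndex, Nat.odd_iff]
  split_ifs <;> omega

lemma two_mul_sum_range_add_one (n : ℕ) : 2 * ∑ i ∈ range n, ((i : ℤ) + 1) = n * (n + 1) := by
  have h := sum_range_id_mul_two (n + 1)
  rw [sum_range_succ'] at h
  simp only [add_zero, add_tsub_cancel_right] at h
  exact_mod_cast (by linarith : 2 * ∑ i ∈ range n, (i + 1) = n * (n + 1))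

lemma sum_centreIndex (k : ℕ) :
    ∑ i ∈ range k, centreIndex k i = if Odd k then 1 else 0 := by
  have hsplit : ∀ i, centreIndex k i =
      (2 * ((i : ℤ) + 1) - (k + 1)) + if Odd k ∧ i = (k - 1) / 2 then 1 else 0 := by
    intro i
    simp only [centreIndex, Nat.odd_iff]
    split_ifs <;> omega
  have hbase : ∑ i ∈ range k, (2 * ((i : ℤ) + 1) - (k + 1)) = 0 := by
    rw [sum_sub_distrib, ← mul_sum, two_mul_sum_range_add_one, sum_const, card_range, nsmul_eq_mul]
    ring
  rw [sum_congr rfl fun i _ => hsplit i, sum_add_distrib, hbase, zero_add]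
  by_cases hk : Odd k
  · have : (k - 1) / 2 < k := by have := Nat.odd_iff.mp hk; omega
    simp [hk, this]
  · simp [hk]

end centreIndex

lemma centreIndex_mul_inv (k i : ℕ) :
    (centreIndex k i : ℝ) * ((k : ℝ) + 1)⁻¹ = if Odd k ∧ i + 1 = (k + 1) / 2
      then 1 / ((k : ℝ) + 1) else 2 * ((i : ℝ) + 1) / ((k : ℝ) + 1) - 1 := by
  unfold centreIndex
  split_ifs
  · simp
  · push_cast
    field_simp

lemma le_abs_of_abs_sub_intCast_mul_le {x u δ : ℝ} {n : ℤ} (hn : n ≠ 0) (hu : 0 ≤ u)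
    (h : |x - n * u| ≤ δ) : u - δ ≤ |x| := by
  have hn1 : (1 : ℝ) ≤ |(n : ℝ)| := by exact_mod_cast Int.one_le_abs hn
  have hnu : u ≤ |n * u| := by
    rw [abs_mul, abs_of_nonneg hu]
    nlinarith
  have := abs_sub_abs_le_abs_sub (n * u : ℝ) x
  rw [abs_sub_comm] at this
  linarith

lemma sub_le_ncard_of_forall_le_mem {k m : ℕ} (hm : m < k) {s : Set (Fin k)}
    (h : ∀ i : Fin k, m ≤ i → i ∈ s) : k - m ≤ s.ncard :=
  calc k - m = #(Ici (⟨m, hm⟩ : Fin k)) := (Fin.card_Ici (⟨m, hm⟩ : Fin k)).symm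
    _ = (↑(Ici (⟨m, hm⟩ : Fin k)) : Set (Fin k)).ncard := (Set.ncard_coe_finset _).symm
    _ ≤ s.ncard :=
      Set.ncard_le_ncard (fun i hi => h i (by simpa [Fin.le_def] using hi)) (Set.toFinite _)

lemma pos_of_natCast_add_one_mul_eq_one {k : ℕ} {u : ℝ} (hu : ((k : ℝ) + 1) * u = 1) :
    0 < u :=
  pos_of_mul_pos_right (hu ▸ one_pos) (by positivity)

def IsNearCentres (k : ℕ) (u : ℝ) (a : Fin k → ℝ) : Prop :=
  ∀ i, |a i - centreIndex k i * u| ≤ u ^ 2 / 8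

namespace IsNearCentres

variable {k : ℕ} {u : ℝ} {a : Fin k → ℝ}

lemma abs_le_one (ha : IsNearCentres k u a) (hu : ((k : ℝ) + 1) * u = 1) (i : Fin k) :
    |a i| ≤ 1 := by
  have hu₀ := pos_of_natCast_add_one_mul_eq_one hu
  have hN : |(centreIndex k i : ℝ)| ≤ k := by exact_mod_cast abs_centreIndex_le i.isLt
  have hc : |centreIndex k i * u| ≤ k * u := by
    rw [abs_mul, abs_of_pos hu₀]
    exact mul_le_mul_of_nonneg_right hN hu₀.le
  have := abs_sub_abs_le_abs_sub (a i) (centreIndex k i * u)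
  nlinarith [ha i]

lemma abs_sum_sub_le (ha : IsNearCentres k u a) :
    |∑ j, a j - (if Odd k then 1 else 0) * u| ≤ k * (u ^ 2 / 8) := by
  have hc : ∑ j : Fin k, (centreIndex k j : ℝ) * u = (if Odd k then 1 else 0) * u := by
    rw [← sum_mul, Fin.sum_univ_eq_sum_range (fun i => (centreIndex k i : ℝ)), ← Int.cast_sum,
      sum_centreIndex]
    split_ifs <;> simp
  calc |∑ j, a j - (if Odd k then 1 else 0) * u| = |∑ j, (a j - centreIndex k j * u)| := by
        rw [sum_sub_distrib, hc]
    _ ≤ ∑ j, |a j - centreIndex k j * u| := abs_sum_le_sum_abs _ _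
    _ ≤ ∑ _j : Fin k, u ^ 2 / 8 := sum_le_sum fun j _ => ha j
    _ = k * (u ^ 2 / 8) := by simp

lemma abs_sum_le_one (ha : IsNearCentres k u a) (hu : ((k : ℝ) + 1) * u = 1) :
    |∑ j, a j| ≤ 1 := by
  have hu₀ := pos_of_natCast_add_one_mul_eq_one hu
  have hs : |(if Odd k then 1 else 0) * u| ≤ u := by
    split_ifs <;> simp [abs_of_pos hu₀, hu₀.le]
  have hku : k * u ^ 2 = u - u ^ 2 := by linear_combination u * hu
  have hu₁ : u ≤ 1 := by nlinarith
  have := abs_sub_abs_le_abs_sub (∑ j, a j) ((if Odd k then 1 else 0) * u)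
  nlinarith [ha.abs_sum_sub_le, mul_nonneg (sub_nonneg.mpr hu₁) (by linarith : (0 : ℝ) ≤ 8 - u)]

lemma le_abs_sub (ha : IsNearCentres k u a) (hu : ((k : ℝ) + 1) * u = 1) {i j : Fin k}
    (hij : i ≠ j) : u ^ 2 / 4 ≤ |a i - a j| := by
  have hu₀ := pos_of_natCast_add_one_mul_eq_one hu
  have hN : centreIndex k i - centreIndex k j ≠ 0 :=
    sub_ne_zero.mpr fun h => hij (Fin.ext (centreIndex_injective k h))
  refine le_trans ?_ (le_abs_of_abs_sub_intCast_mul_le hN hu₀.le (δ := u ^ 2 / 8 + u ^ 2 / 8) ?_)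
  · nlinarith
  · calc |a i - a j - ((centreIndex k i - centreIndex k j : ℤ) : ℝ) * u|
          = |(a i - centreIndex k i * u) - (a j - centreIndex k j * u)| := by push_cast; ring_nf
      _ ≤ |a i - centreIndex k i * u| + |a j - centreIndex k j * u| := abs_sub _ _
      _ ≤ u ^ 2 / 8 + u ^ 2 / 8 := add_le_add (ha i) (ha j)

lemma le_abs_add_sum (ha : IsNearCentres k u a) (hu : ((k : ℝ) + 1) * u = 1) (i : Fin k) :
    u ^ 2 / 4 ≤ |a i + ∑ j, a j| := by
  have hu₀ := pos_of_natCast_add_one_mul_eq_one hu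
  refine le_trans ?_ (le_abs_of_abs_sub_intCast_mul_le (centreIndex_add_ne_zero k i) hu₀.le
    (δ := u ^ 2 / 8 + k * (u ^ 2 / 8)) ?_)
  · nlinarith
  · calc |a i + ∑ j, a j - ((centreIndex k i + if Odd k then 1 else 0 : ℤ) : ℝ) * u|
          = |(a i - centreIndex k i * u) + (∑ j, a j - (if Odd k then 1 else 0) * u)| := by
            push_cast; ring_nf
      _ ≤ |a i - centreIndex k i * u| + |∑ j, a j - (if Odd k then 1 else 0) * u| :=
            abs_add_le _ _
      _ ≤ u ^ 2 / 8 + k * (u ^ 2 / 8) := add_le_add (ha i) ha.abs_sum_sub_le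

lemma one_div_four_le (ha : IsNearCentres k u a) (hu : ((k : ℝ) + 1) * u = 1) {i : Fin k}
    (hi : min (5 * (k + 1) / 8) (k - 1) ≤ (i : ℕ)) : 1 / 4 ≤ a i := by
  have hu₀ := pos_of_natCast_add_one_mul_eq_one hu
  have hN : (k : ℝ) + 2 ≤ 4 * centreIndex k i := by
    exact_mod_cast add_two_le_four_mul_centreIndex hi i.isLt
  have := (abs_le.mp (ha i)).1
  nlinarith

lemma le_ncard (ha : IsNearCentres k u a) (hu : ((k : ℝ) + 1) * u = 1) (hk : 1 ≤ k) :
    ((k : ℝ) + 1) / 5 ≤ ({j | 1 / 4 ≤ a j} : Set (Fin k)).ncard := by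
  set m := min (5 * (k + 1) / 8) (k - 1)
  have hcard : k - m ≤ ({j | 1 / 4 ≤ a j} : Set (Fin k)).ncard :=
    sub_le_ncard_of_forall_le_mem (by omega) fun i hi => ha.one_div_four_le hu hi
  have : k + 1 ≤ 5 * ({j | 1 / 4 ≤ a j} : Set (Fin k)).ncard := by omega
  have : ((k + 1 : ℕ) : ℝ) ≤ 5 * ({j | 1 / 4 ≤ a j} : Set (Fin k)).ncard := by exact_mod_cast this
  push_cast at this
  linarith

end IsNearCentres

theorem stmt_4 (k : ℕ) (hk : 1 ≤ k)
    (c : Fin k → ℝ)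
    (hc : ∀ i : Fin k,
      c i = if Odd k ∧ (i : ℕ) + 1 = (k + 1) / 2
            then 1 / ((k : ℝ) + 1)
            else 2 * ((i : ℕ) + 1) / ((k : ℝ) + 1) - 1)
    (α β : Fin k → ℝ)
    (hα : ∀ i, α i = c i - 1 / (8 * ((k : ℝ) + 1) ^ 2))
    (hβ : ∀ i, β i = c i + 1 / (8 * ((k : ℝ) + 1) ^ 2))
    (a : Fin k → ℝ) (ha : ∀ i, a i ∈ Set.Icc (α i) (β i)) :
    (∀ i, |a i| ≤ 1) ∧
    |∑ j, a j| ≤ 1 ∧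
    (∀ i, 1 / (4 * ((k : ℝ) + 1) ^ 2) ≤ β i - α i) ∧
    (∀ i j, i ≠ j → 1 / (4 * ((k : ℝ) + 1) ^ 2) ≤ |a i - a j|) ∧
    (∀ i, 1 / (4 * ((k : ℝ) + 1) ^ 2) ≤ |a i + ∑ j, a j|) ∧
    ((k : ℝ) + 1) / 5 ≤ ({j | 1 / 4 ≤ a j} : Set (Fin k)).ncard := by
  have h8 : 1 / (8 * ((k : ℝ) + 1) ^ 2) = ((k : ℝ) + 1)⁻¹ ^ 2 / 8 := by field_simp
  have h4 : 1 / (4 * ((k : ℝ) + 1) ^ 2) = ((k : ℝ) + 1)⁻¹ ^ 2 / 4 := by field_simp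
  set u : ℝ := ((k : ℝ) + 1)⁻¹
  have hu : ((k : ℝ) + 1) * u = 1 := mul_inv_cancel₀ (by positivity)
  have hnear : IsNearCentres k u a := fun i => by
    have hci : c i = centreIndex k i * u := by rw [hc i, centreIndex_mul_inv]
    rw [abs_le]
    obtain ⟨h₁, h₂⟩ := ha i
    rw [hα, h8, hci] at h₁
    rw [hβ, h8, hci] at h₂
    constructor <;> linarith
  refine ⟨hnear.abs_le_one hu, hnear.abs_sum_le_one hu, fun i => ?_,
    fun i j hij => h4 ▸ hnear.le_abs_sub hu hij, fun i => h4 ▸ hnear.le_abs_add_sum hu i,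
    hnear.le_ncard hu hk⟩
  rw [hα, hβ, h4, h8]
  linarith
end

section
/- For the code C obtained from the unit group construction: if x, y ∈ Γ ∩ cB(t) are distinct codeword preimages, and z = y⁻¹x − 1 ∈ 𝒪 is nonzero, then the absolute norm satisfies N(z) ≥ q^{N − d_R(C)}, where d_R is the sum-rank distance between Θ(x) and Θ(y). In simplified algebraic form: if z ∈ 𝒪 is nonzero with z𝒪 ⊆ 𝒪, and for each 𝔭 ∈ S the rank of ι_𝔭(z) is r_𝔭, then |𝒪/z𝒪| ≥ Π_{𝔭 ∈ S} q₀^{d(d − r_𝔭)}. -/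
open NumberField Function

/-!
Write `B_𝔭 = ι_𝔭(z)`. Distinct nonzero primes of `𝓞 F` are comaximal, so by the Chinese remainder
theorem `w ↦ (ι_𝔭 w)_𝔭` maps `𝒪` onto `∏_{𝔭 ∈ S} M_d(F_{q₀})`. It carries `z𝒪` into
`∏_𝔭 B_𝔭 M_d(F_{q₀})`, so the index of `z𝒪` in `𝒪` is at least
`∏_𝔭 [M_d(F_{q₀}) : B_𝔭 M_d(F_{q₀})]`.
A matrix lies in `B M_d(F_{q₀})` iff each of its columns lies in the column space of `B`, whence
`[M_d(F_{q₀}) : B M_d(F_{q₀})] = q₀^{d(d - rank B)}`. Finally the index of `z𝒪` is finite: `𝒪` is a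
finitely generated abelian group spanning `A` over `F`, so for every `w ∈ 𝒪` some nonzero integer
multiple of `z⁻¹w` lies in `𝒪`, i.e. `𝒪 ⧸ z𝒪` is torsion.
-/

theorem Submodule.index_toAddSubgroup {K V : Type*} [Field K] [Finite K] [AddCommGroup V]
    [Module K V] [Module.Finite K V] (W : Submodule K V) :
    W.toAddSubgroup.index = Nat.card K ^ (Module.finrank K V - Module.finrank K W) := by
  have : Finite V := Module.finite_of_finite K
  rw [← W.finrank_quotient]
  exact Module.natCard_eq_pow_finrank (V := V ⧸ W)

theorem Matrix.range_mulLeft_eq_comap {K n : Type*} [Field K] [Fintype n] (B : Matrix n n K) :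
    (AddMonoidHom.mulLeft B).range = (AddSubgroup.pi Set.univ fun _ =>
      (LinearMap.range B.mulVecLin).toAddSubgroup).comap
        ((transposeAddEquiv n n K).trans ofAddEquiv.symm).toAddMonoidHom := by
  ext X
  simp only [AddMonoidHom.mem_range, AddMonoidHom.coe_mulLeft, AddSubgroup.mem_comap,
    AddSubgroup.mem_pi, Set.mem_univ, forall_const, Submodule.mem_toAddSubgroup,
    LinearMap.mem_range, Matrix.mulVecLin_apply]
  constructor
  · rintro ⟨Y, rfl⟩ j
    exact ⟨Y.transpose j, by ext i; simp [Matrix.mul_apply, Matrix.mulVec, dotProduct, mul_comm]⟩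
  · intro h
    choose v hv using h
    refine ⟨(Matrix.of v).transpose, ?_⟩
    ext i j
    simpa [Matrix.mul_apply, Matrix.mulVec, dotProduct] using congrFun (hv j) i

theorem Matrix.index_range_mulLeft {K n : Type*} [Field K] [Finite K] [Fintype n]
    (B : Matrix n n K) :
    (AddMonoidHom.mulLeft B).range.index =
      Nat.card K ^ (Fintype.card n * (Fintype.card n - B.rank)) := by
  rw [B.range_mulLeft_eq_comap, AddSubgroup.index_comap_of_surjective _ (AddEquiv.surjective _),
    AddSubgroup.index_pi, Finset.prod_const, Submodule.index_toAddSubgroup, ← pow_mul,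
    Module.finrank_fintype_fun_eq_card, Finset.card_univ, mul_comm]
  rfl

theorem AddSubgroup.finiteIndex_of_forall_nsmul_mem {G : Type*} [AddCommGroup G] [AddGroup.FG G]
    (H : AddSubgroup G) (h : ∀ g, ∃ n ≠ 0, n • g ∈ H) : H.FiniteIndex := by
  have : Finite (G ⧸ H) := by
    refine AddCommGroup.finite_of_fg_isAddTorsion _ fun x => ?_
    obtain ⟨g, rfl⟩ := QuotientAddGroup.mk_surjective x
    obtain ⟨n, hn, hg⟩ := h g
    exact isOfFinAddOrder_iff_nsmul_eq_zero.2
      ⟨n, Nat.pos_of_ne_zero hn, (QuotientAddGroup.eq_zero_iff _).2 hg⟩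
  exact H.finiteIndex_of_finite_quotient

theorem exists_nsmul_mem_of_mem_span {F A : Type*} [Field F] [NumberField F] [AddCommGroup A]
    [Module F A] [Module (𝓞 F) A] [IsScalarTower (𝓞 F) F A] {M : AddSubgroup A}
    (hM : ∀ p : 𝓞 F, ∀ y ∈ M, p • y ∈ M) {a : A} (ha : a ∈ Submodule.span F (M : Set A)) :
    ∃ n ≠ 0, n • a ∈ M := by
  induction ha using Submodule.span_induction with
  | mem x hx => exact ⟨1, one_ne_zero, by simpa using hx⟩
  | zero => exact ⟨1, one_ne_zero, by simp⟩
  | add x y _ _ hx hy =>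
    obtain ⟨m, hm, hmx⟩ := hx
    obtain ⟨n, hn, hny⟩ := hy
    refine ⟨n * m, mul_ne_zero hn hm, ?_⟩
    rw [smul_add, mul_smul, mul_comm, mul_smul]
    exact M.add_mem (M.nsmul_mem hmx n) (M.nsmul_mem hny m)
  | smul c x _ hx =>
    obtain ⟨n, hn, hnx⟩ := hx
    obtain ⟨k, b, hk, hkc⟩ := IsAlgebraic.exists_nsmul_eq (𝓞 F)
      ((IsFractionRing.isAlgebraic_iff ℤ ℚ F).2 (.of_finite ℚ c))
    refine ⟨k * n, mul_ne_zero hk hn, ?_⟩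
    rw [mul_smul, smul_comm n c, ← Nat.cast_smul_eq_nsmul F k, smul_smul, ← nsmul_eq_mul, hkc,
      algebraMap_smul]
    exact hM b _ hnx

theorem RingHom.surjective_pi_of_pairwise_isCoprime {R B ι : Type*} [CommRing R] [Ring B]
    [Fintype ι] [DecidableEq ι] {M : ι → Type*} [∀ i, Ring (M i)] {I : ι → Ideal R}
    (hI : Pairwise (IsCoprime on I)) (φ : R →+* B) (f : ∀ i, B →+* M i)
    (hf : ∀ i, Function.Surjective (f i)) (hφ : ∀ i, ∀ p ∈ I i, f i (φ p) = 0) :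
    Function.Surjective (RingHom.pi f) := by
  have hcongr : ∀ i r s, r - s ∈ I i → f i (φ r) = f i (φ s) := fun i r s h =>
    sub_eq_zero.1 (by rw [← map_sub, ← map_sub]; exact hφ i _ h)
  choose e he using fun i => Ideal.exists_forall_sub_mem_ideal hI fun j => if j = i then 1 else 0
  have hfe : ∀ i j, f j (φ (e i)) = if j = i then 1 else 0 := fun i j => by
    rw [hcongr j _ _ (he i j)]; split_ifs <;> simp
  intro t
  choose x hx using fun i => hf i (t i)
  refine ⟨∑ i, φ (e i) * x i, funext fun j => ?_⟩
  simp [map_sum, hfe, hx]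

theorem AddMonoidHom.range_mulLeft_eq_closure {R : Type*} [Ring R] (z : R) :
    (mulLeft z).range = AddSubgroup.closure {w | ∃ y, w = z * y} :=
  (AddSubgroup.closure_eq_of_le _ (by rintro _ ⟨y, rfl⟩; exact ⟨y, rfl⟩)
    (by rintro _ ⟨y, rfl⟩; exact AddSubgroup.subset_closure ⟨y, rfl⟩)).symm

theorem AddMonoidHom.range_mulLeft_pi {ι : Type*} {M : ι → Type*} [∀ i, Ring (M i)]
    (x : ∀ i, M i) :
    (mulLeft x).range = AddSubgroup.pi Set.univ fun i => (mulLeft (x i)).range := by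
  ext y
  simp only [mem_range, coe_mulLeft, AddSubgroup.mem_pi, Set.mem_univ, forall_const]
  refine ⟨fun ⟨w, hw⟩ i => ⟨w i, congrFun hw i⟩, fun h => ?_⟩
  choose w hw using h
  exact ⟨w, funext hw⟩

theorem AddMonoidHom.index_range_mulLeft_le_of_surjective {R M : Type*} [Ring R] [Ring M]
    (g : R →+* M) (hg : Surjective g) (z : R) [(mulLeft z).range.FiniteIndex] :
    (mulLeft (g z)).range.index ≤ (mulLeft z).range.index :=
  calc (mulLeft (g z)).range.index
      = ((mulLeft (g z)).range.comap g.toAddMonoidHom).index :=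
        (AddSubgroup.index_comap_of_surjective _ hg).symm
    _ ≤ (mulLeft z).range.index :=
        AddSubgroup.index_antitone (by rintro _ ⟨y, rfl⟩; exact ⟨g y, (map_mul g z y).symm⟩)

theorem Subring.finiteIndex_range_mulLeft {F A : Type*} [Field F] [NumberField F]
    [DivisionRing A] [Module F A] [Module (𝓞 F) A] [IsScalarTower (𝓞 F) F A] (𝒪 : Subring A)
    (hstab : ∀ p : 𝓞 F, ∀ y ∈ 𝒪, p • y ∈ 𝒪) (hfg : 𝒪.toAddSubgroup.FG)
    (hspan : Submodule.span F (𝒪 : Set A) = ⊤) {z : 𝒪} (hz : z ≠ 0) :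
    (AddMonoidHom.mulLeft z).range.FiniteIndex := by
  have : AddGroup.FG 𝒪 := (AddGroup.fg_iff_addSubgroup_fg _).2 hfg
  refine AddSubgroup.finiteIndex_of_forall_nsmul_mem _ fun w => ?_
  obtain ⟨n, hn, hmem⟩ := exists_nsmul_mem_of_mem_span (M := 𝒪.toAddSubgroup) hstab
    (a := (z : A)⁻¹ * w) (hspan ▸ Submodule.mem_top)
  refine ⟨n, hn, ⟨_, hmem⟩, Subtype.ext ?_⟩
  have hz' : (z : A) ≠ 0 := by simpa using hz
  change (z : A) * (n • ((z : A)⁻¹ * w)) = n • (w : A)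
  rw [mul_smul_comm, mul_inv_cancel_left₀ hz']

theorem Subring.surjective_pi_of_ker_eq_closure {F A M : Type*} [Field F] [NumberField F]
    [Ring A] [CharZero A] [Algebra (𝓞 F) A] [Ring M] [Finite M] (𝒪 : Subring A)
    (hstab : ∀ p : 𝓞 F, ∀ y ∈ 𝒪, p • y ∈ 𝒪) {S : Finset (Ideal (𝓞 F))}
    (hS : ∀ 𝔭 ∈ S, 𝔭.IsPrime) (ι : Ideal (𝓞 F) → 𝒪 →+* M)
    (hsurj : ∀ 𝔭 ∈ S, Surjective (ι 𝔭))
    (hker : ∀ 𝔭 ∈ S, ∀ w : 𝒪, ι 𝔭 w = 0 ↔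
      w ∈ AddSubgroup.closure {w : 𝒪 | ∃ p ∈ 𝔭, ∃ y : 𝒪, (w : A) = p • (y : A)}) :
    Surjective (RingHom.pi fun 𝔭 : S => ι 𝔭) := by
  classical
  let φ : 𝓞 F →+* 𝒪 := (algebraMap (𝓞 F) A).codRestrict 𝒪 fun p =>
    (Algebra.algebraMap_eq_smul_one (A := A) p).symm ▸ hstab p 1 𝒪.one_mem
  have hφ : ∀ 𝔭 ∈ S, ∀ p ∈ 𝔭, ι 𝔭 (φ p) = 0 := fun 𝔭 h𝔭 p hp =>
    (hker 𝔭 h𝔭 _).2 (AddSubgroup.subset_closure ⟨p, hp, 1, Algebra.algebraMap_eq_smul_one p⟩)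
  -- `𝔭 = ⊥` would make `ι 𝔭` an embedding of the infinite ring `𝒪` into a finite one
  have hmax : ∀ 𝔭 ∈ S, 𝔭.IsMaximal := by
    refine fun 𝔭 h𝔭 => (hS 𝔭 h𝔭).isMaximal ?_
    rintro rfl
    refine not_injective_infinite_finite (ι ⊥) ((injective_iff_map_eq_zero _).2 fun w hw => ?_)
    simpa [AddSubgroup.closure_singleton_zero, show ∃ x, x ∈ 𝒪 from ⟨0, 𝒪.zero_mem⟩]
      using (hker ⊥ h𝔭 w).1 hw
  refine RingHom.surjective_pi_of_pairwise_isCoprime (I := fun 𝔭 : S => (𝔭 : Ideal (𝓞 F)))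
    (fun 𝔭 𝔮 hne => Ideal.isCoprime_iff_sup_eq.2 ?_) φ _ (fun 𝔭 => hsurj 𝔭 𝔭.2)
    (fun 𝔭 => hφ 𝔭 𝔭.2)
  exact (hmax 𝔭 𝔭.2).coprime_of_ne (hmax 𝔮 𝔮.2) (Subtype.coe_injective.ne hne)

theorem stmt_17_general
    (F : Type*) [Field F] [NumberField F]
    (A : Type*) [DivisionRing A] [Algebra F A]
    [Algebra (𝓞 F) A] [IsScalarTower (𝓞 F) F A]
    (d : ℕ)
    (𝒪 : Subring A)
    (hstab : ∀ (p : 𝓞 F), ∀ y ∈ 𝒪, p • y ∈ 𝒪)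
    (hfg : (AddSubgroup.toIntSubmodule 𝒪.toAddSubgroup).FG)
    (hspan : Submodule.span F (𝒪 : Set A) = ⊤)
    (q₀ : ℕ) (Fq₀ : Type*) [Field Fq₀] [Fintype Fq₀] (hq₀ : Fintype.card Fq₀ = q₀)
    (S : Finset (Ideal (𝓞 F))) (hS : ∀ 𝔭 ∈ S, 𝔭.IsPrime)
    (P : Ideal (𝓞 F) → AddSubgroup 𝒪)
    (hP : ∀ 𝔭, P 𝔭 = AddSubgroup.closure {w : 𝒪 | ∃ p ∈ 𝔭, ∃ y : 𝒪, (w : A) = p • (y : A)})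
    (ι : Ideal (𝓞 F) → (𝒪 →+* Matrix (Fin d) (Fin d) Fq₀))
    (hsurj : ∀ 𝔭 ∈ S, Function.Surjective (ι 𝔭))
    (hker : ∀ 𝔭 ∈ S, ∀ w : 𝒪, ι 𝔭 w = 0 ↔ w ∈ P 𝔭)
    (z : 𝒪) (hz : z ≠ 0)
    (r : Ideal (𝓞 F) → ℕ) (hr : ∀ 𝔭 ∈ S, (ι 𝔭 z).rank = r 𝔭)
    (z𝒪 : AddSubgroup 𝒪)
    (hz𝒪 : z𝒪 = AddSubgroup.closure {w : 𝒪 | ∃ y : 𝒪, w = z * y}) :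
    (∏ 𝔭 ∈ S, q₀ ^ (d * (d - r 𝔭))) ≤ Nat.card (𝒪 ⧸ z𝒪) := by
  have : CharZero A := charZero_of_injective_algebraMap (algebraMap F A).injective
  have hev := 𝒪.surjective_pi_of_ker_eq_closure hstab hS ι hsurj fun 𝔭 h𝔭 w =>
    hP 𝔭 ▸ hker 𝔭 h𝔭 w
  have := 𝒪.finiteIndex_range_mulLeft hstab
    (by simpa using (Submodule.fg_iff_addSubgroup_fg _).1 hfg) hspan hz
  rw [hz𝒪, ← AddMonoidHom.range_mulLeft_eq_closure, ← AddSubgroup.index]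
  calc ∏ 𝔭 ∈ S, q₀ ^ (d * (d - r 𝔭))
      = ∏ 𝔭 : S, (AddMonoidHom.mulLeft (ι 𝔭 z)).range.index := by
        rw [← Finset.prod_coe_sort]
        refine Finset.prod_congr rfl fun 𝔭 _ => ?_
        rw [Matrix.index_range_mulLeft, Nat.card_eq_fintype_card, hq₀, Fintype.card_fin, hr 𝔭 𝔭.2]
    _ = (AddMonoidHom.mulLeft (RingHom.pi (fun 𝔭 : S => ι 𝔭) z)).range.index := by
        rw [AddMonoidHom.range_mulLeft_pi, AddSubgroup.index_pi]
        rfl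
    _ ≤ (AddMonoidHom.mulLeft z).range.index :=
        AddMonoidHom.index_range_mulLeft_le_of_surjective _ hev z

/-- simplified algebraic form: `A` is a central division algebra
of degree `d` over a number field `F`, `𝒪` a maximal order, `S` a finite set of
primes of `𝓞 F` unramified in `A` with residue field `F_{q₀}`, with fixed
isomorphisms `ι_𝔭 : 𝒪/𝔭𝒪 ≅ M_d(F_{q₀})` (encoded as surjective ring
homomorphisms with kernel `𝔭𝒪`).  If `z ∈ 𝒪` is nonzero and for each `𝔭 ∈ S`
the rank of `ι_𝔭(z)` is `r_𝔭`, then `|𝒪/z𝒪| ≥ ∏_{𝔭 ∈ S} q₀^(d(d - r_𝔭))`. -/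
theorem stmt_17
    (F : Type*) [Field F] [NumberField F]
    (A : Type*) [DivisionRing A] [Algebra F A] [Algebra.IsCentral F A]
    [Algebra (𝓞 F) A] [IsScalarTower (𝓞 F) F A]
    (d : ℕ) (hd : 2 ≤ d) (hdim : Module.finrank F A = d ^ 2)
    (𝒪 : Subring A)
    (hstab : ∀ (p : 𝓞 F), ∀ y ∈ 𝒪, p • y ∈ 𝒪)
    (hfg : (AddSubgroup.toIntSubmodule 𝒪.toAddSubgroup).FG)
    (hspan : Submodule.span F (𝒪 : Set A) = ⊤)
    (hmax : ∀ 𝒪' : Subring A, (AddSubgroup.toIntSubmodule 𝒪'.toAddSubgroup).FG →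
      Submodule.span F (𝒪' : Set A) = ⊤ → 𝒪 ≤ 𝒪' → 𝒪' = 𝒪)
    (q₀ : ℕ) (Fq₀ : Type*) [Field Fq₀] [Fintype Fq₀] (hq₀ : Fintype.card Fq₀ = q₀)
    (S : Finset (Ideal (𝓞 F))) (hS : ∀ 𝔭 ∈ S, 𝔭.IsPrime)
    (P : Ideal (𝓞 F) → AddSubgroup 𝒪)
    (hP : ∀ 𝔭, P 𝔭 = AddSubgroup.closure {w : 𝒪 | ∃ p ∈ 𝔭, ∃ y : 𝒪, (w : A) = p • (y : A)})
    (ι : Ideal (𝓞 F) → (𝒪 →+* Matrix (Fin d) (Fin d) Fq₀))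
    (hsurj : ∀ 𝔭 ∈ S, Function.Surjective (ι 𝔭))
    (hker : ∀ 𝔭 ∈ S, ∀ w : 𝒪, ι 𝔭 w = 0 ↔ w ∈ P 𝔭)
    (z : 𝒪) (hz : z ≠ 0)
    (r : Ideal (𝓞 F) → ℕ) (hr : ∀ 𝔭 ∈ S, (ι 𝔭 z).rank = r 𝔭)
    (z𝒪 : AddSubgroup 𝒪)
    (hz𝒪 : z𝒪 = AddSubgroup.closure {w : 𝒪 | ∃ y : 𝒪, w = z * y}) :
    (∏ 𝔭 ∈ S, q₀ ^ (d * (d - r 𝔭))) ≤ Nat.card (𝒪 ⧸ z𝒪) :=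
  stmt_17_general F A d 𝒪 hstab hfg hspan q₀ Fq₀ hq₀ S hS P hP ι hsurj hker z hz r hr z𝒪 hz𝒪
end
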